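/- arXiv:1106.4771 — 5 statements merged into one kernel-verified Lean document; each statement's English description precedes it below -/
import Mathlib

section
/- Let u satisfy the FKPP hypotheses. Then there exists a constant C₅ > 0 such that for all t ≥ 1 and all y ∈ [0, √t], u(t, √2·t − (3/(2√2))·log t + y) ≥ 1 − C₅·(y+2)⁴·e^{−√2·y}. (Upper bound on the probability that some particle of branching Brownian motion exceeds √2·t − (3/(2√2))·log t + y at time t.) -/
open Real MeasureTheory Filter Set

/-- The FKPP hypotheses for a function `u : (0,∞) × ℝ → ℝ` (defined on all of `ℝ × ℝ`,
with the conditions imposed only for positive times):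
`0 ≤ u ≤ 1`; `u` is continuous, `C¹` in time and `C²` in space on `(0,∞) × ℝ`;
`u` satisfies the FKPP equation `∂u/∂t = (1/2)·∂²u/∂x² + u² − u` there;
`u(t,x) → 1` as `t → 0⁺` for `x > 0` and `u(t,x) → 0` as `t → 0⁺` for `x < 0`;
and `x ↦ u(t,x)` is nondecreasing for each `t > 0`. -/
structure IsFKPPSolution (u : ℝ → ℝ → ℝ) : Prop where
  nonneg : ∀ t > (0:ℝ), ∀ x : ℝ, 0 ≤ u t x
  le_one : ∀ t > (0:ℝ), ∀ x : ℝ, u t x ≤ 1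
  cont : ContinuousOn (fun p : ℝ × ℝ => u p.1 p.2) {p : ℝ × ℝ | 0 < p.1}
  diff_t : ∀ t > (0:ℝ), ∀ x : ℝ, DifferentiableAt ℝ (fun s => u s x) t
  diff_x : ∀ t > (0:ℝ), ∀ x : ℝ, DifferentiableAt ℝ (fun y => u t y) x
  diff_xx : ∀ t > (0:ℝ), ∀ x : ℝ, DifferentiableAt ℝ (deriv (fun y => u t y)) x
  cont_deriv_t : ContinuousOn (fun p : ℝ × ℝ => deriv (fun s => u s p.2) p.1)
    {p : ℝ × ℝ | 0 < p.1}
  cont_deriv_x : ContinuousOn (fun p : ℝ × ℝ => deriv (fun y => u p.1 y) p.2)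
    {p : ℝ × ℝ | 0 < p.1}
  cont_deriv_xx : ContinuousOn (fun p : ℝ × ℝ => deriv (deriv (fun y => u p.1 y)) p.2)
    {p : ℝ × ℝ | 0 < p.1}
  pde : ∀ t > (0:ℝ), ∀ x : ℝ,
    deriv (fun s => u s x) t
      = (1/2) * deriv (deriv (fun y => u t y)) x + (u t x)^2 - u t x
  init_pos : ∀ x > (0:ℝ), Tendsto (fun t => u t x) (nhdsWithin 0 (Ioi 0)) (nhds 1)
  init_neg : ∀ x < (0:ℝ), Tendsto (fun t => u t x) (nhdsWithin 0 (Ioi 0)) (nhds 0)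
  mono : ∀ t > (0:ℝ), Monotone (fun x => u t x)

/-!
`w = 1 - u` solves `w_t = ½ w_xx + w - w²`, so a parabolic maximum principle bounds `w` by any
nonnegative supersolution that dominates it at the initial time and on a nondecreasing left
boundary curve. Comparing first with `exp (-k x + (k²/2 + 1) t)`, started at times `t₀ → 0`, gives
the Gaussian tail `w(t, x) ≤ exp (t - x²/(2t))`. Then, for `t ≥ 16` and `x ≥ m(t)`, where
`m(t) = √2 t - 3/(2√2) log t`, we compare with
`B(t, x) = M(t) (2000 S e^{-S²/(2t)} + 300 e^{-S²/(4t)}) e^{-√2 (x - m(t))}`, `S = x - m(t) + 2`.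
In the frame moving with `m`, the mode `S e^{-S²/(2t)}` solves the linearized equation exactly, the
wider Gaussian dominates the initial tail at `t = 16`, and the increasing, bounded amplitude
`M(t) = exp (150 - 600/√t)` absorbs the error of that second term. At `x = m(t) + y` the barrier is
at most `C (y + 2) e^{-√2 y}`.
-/

open Topology

theorem IsMaxOn.hasDerivAt_nonneg_of_right {g : ℝ → ℝ} {a b g' : ℝ} (hmax : IsMaxOn g (Icc a b) b)
    (hab : a < b) (hg : HasDerivAt g g' b) : 0 ≤ g' := by
  have hcone : a - b ∈ posTangentConeAt (Icc a b) b :=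
    sub_mem_posTangentConeAt_of_segment_subset (by rw [segment_symm, segment_eq_Icc hab.le])
  have := hmax.localize.hasFDerivWithinAt_nonpos hg.hasFDerivAt.hasFDerivWithinAt hcone
  rw [ContinuousLinearMap.toSpanSingleton_apply, smul_eq_mul] at this
  nlinarith

theorem IsLocalMax.hasDerivAt_deriv_nonpos {f f' : ℝ → ℝ} {x f'' : ℝ} (h : IsLocalMax f x)
    (hf : ∀ᶠ y in 𝓝 x, HasDerivAt f (f' y) y) (hf' : HasDerivAt f' f'' x) : f'' ≤ 0 := by
  by_contra! hpos
  have hd : deriv f =ᶠ[𝓝 x] f' := hf.mono fun y hy => hy.deriv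
  have hdd : deriv (deriv f) x = f'' := (hf'.congr_of_eventuallyEq hd).deriv
  have hmin : IsLocalMin f x := isLocalMin_of_deriv_deriv_pos (hdd ▸ hpos)
    (hf.self_of_nhds.deriv.trans (h.hasDerivAt_eq_zero hf.self_of_nhds))
    hf.self_of_nhds.continuousAt
  have hconst : f =ᶠ[𝓝 x] fun _ => f x := (h.and hmin).mono fun y hy => le_antisymm hy.1 hy.2
  have : deriv (deriv f) x = 0 := by rw [hconst.deriv.deriv_eq]; simp
  linarith

/-- A supersolution of `w_t = ½ w_xx + w - w²`, the equation solved by `1 - u`, on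
`{(t, x) | a < t ≤ b, γ t < x}`. -/
structure IsKPPSupersolutionOn (a b : ℝ) (γ : ℝ → ℝ) (Φ Φt Φx Φxx : ℝ → ℝ → ℝ) : Prop where
  hasDerivAt_t : ∀ t ∈ Ioc a b, ∀ x, γ t < x → HasDerivAt (fun s => Φ s x) (Φt t x) t
  hasDerivAt_x : ∀ t ∈ Ioc a b, ∀ x, γ t < x → HasDerivAt (Φ t) (Φx t x) x
  hasDerivAt_xx : ∀ t ∈ Ioc a b, ∀ x, γ t < x → HasDerivAt (Φx t) (Φxx t x) x
  le_deriv_t : ∀ t ∈ Ioc a b, ∀ x, γ t < x → 1 / 2 * Φxx t x + Φ t x - Φ t x ^ 2 ≤ Φt t x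

theorem isCompact_Icc_prod_inter_le {a b c d : ℝ} {γ : ℝ → ℝ} (hγ : ContinuousOn γ (Icc a b)) :
    IsCompact {p : ℝ × ℝ | (p.1 ∈ Icc a b ∧ γ p.1 ≤ p.2) ∧ p.2 ∈ Icc c d} := by
  have hbox : IsCompact (Icc a b ×ˢ Icc c d) := isCompact_Icc.prod isCompact_Icc
  have hcont : ContinuousOn (fun p : ℝ × ℝ => p.2 - γ p.1) (Icc a b ×ˢ Icc c d) :=
    continuousOn_snd.sub (hγ.comp continuousOn_fst fun p hp => hp.1)
  refine hbox.of_isClosed_subset ?_ fun p hp => ⟨hp.1.1, hp.2⟩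
  convert hcont.preimage_isClosed_of_isClosed hbox.isClosed (isClosed_Ici (a := 0)) using 1
  ext p
  simp only [mem_inter_iff, mem_prod, mem_preimage, mem_Ici, sub_nonneg]
  exact ⟨fun ⟨⟨h₁, h₂⟩, h₃⟩ => ⟨⟨h₁, h₃⟩, h₂⟩, fun ⟨⟨h₁, h₃⟩, h₂⟩ => ⟨⟨h₁, h₂⟩, h₃⟩⟩

theorem IsMaxOn.isLocalMax_and_isMaxOn_slices {f : ℝ × ℝ → ℝ} {a b c d t x : ℝ} {γ : ℝ → ℝ}
    (hmax : IsMaxOn f {p | (p.1 ∈ Icc a b ∧ γ p.1 ≤ p.2) ∧ p.2 ∈ Icc c d} (t, x))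
    (hγm : MonotoneOn γ (Icc a b)) (ht : t ∈ Icc a b) (hx : γ t < x) (hc : c < x) (hd : x < d) :
    IsLocalMax (fun ξ => f (t, ξ)) x ∧ IsMaxOn (fun s => f (s, x)) (Icc a t) t := by
  have hmem : ∀ s ξ, s ∈ Icc a b → γ s ≤ ξ → ξ ∈ Icc c d → f (s, ξ) ≤ f (t, x) :=
    fun s ξ hs hξ hξcd => hmax (a := (s, ξ)) ⟨⟨hs, hξ⟩, hξcd⟩
  refine ⟨?_, fun s hs => ?_⟩
  · filter_upwards [Ioo_mem_nhds (max_lt hx hc) hd] with ξ hξ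
    exact hmem t ξ ht ((le_max_left _ _).trans hξ.1.le) ⟨(le_max_right _ _).trans hξ.1.le, hξ.2.le⟩
  · have hs' : s ∈ Icc a b := ⟨hs.1, hs.2.trans ht.2⟩
    exact hmem s x hs' ((hγm hs' ht hs.2).trans hx.le) ⟨hc.le, hd.le⟩

theorem IsFKPPSolution.weighted_gap_le_of_isMax {u : ℝ → ℝ → ℝ} (hu : IsFKPPSolution u)
    {a b : ℝ} (ha : 0 ≤ a) {γ : ℝ → ℝ} {Φ Φt Φx Φxx : ℝ → ℝ → ℝ}
    (hΦ : IsKPPSupersolutionOn a b γ Φ Φt Φx Φxx) {x₁ μ t x : ℝ} (ht : t ∈ Ioc a b)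
    (hx : γ t < x) (hΦ0 : 0 ≤ Φ t x) (hgap : Φ t x < 1 - u t x)
    (hmax_x : IsLocalMax (fun ξ => exp (-2 * (t - a)) * (1 - u t ξ - Φ t ξ) - μ * (ξ - x₁) ^ 2) x)
    (hmax_t : IsMaxOn (fun s => exp (-2 * (s - a)) * (1 - u s x - Φ s x) - μ * (x - x₁) ^ 2)
      (Icc a t) t) :
    exp (-2 * (t - a)) * (1 - u t x - Φ t x) ≤ μ := by
  have ht₀ : 0 < t := ha.trans_lt ht.1
  set E := exp (-2 * (t - a))
  set W := 1 - u t x - Φ t x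
  set ut := deriv (fun s => u s x) t
  set ux := deriv (u t)
  set uxx := deriv (deriv (u t)) x
  have hE : 0 < E := exp_pos _
  have hx_test : E * (-uxx - Φxx t x) - μ * 2 ≤ 0 := by
    refine hmax_x.hasDerivAt_deriv_nonpos
      (f' := fun ξ => E * (-ux ξ - Φx t ξ) - μ * (2 * (ξ - x₁))) ?_ ?_
    · filter_upwards [eventually_gt_nhds hx] with ξ hξ
      have hux : HasDerivAt (u t) (ux ξ) ξ := (hu.diff_x t ht₀ ξ).hasDerivAt
      refine ((((hux.const_sub 1).sub (hΦ.hasDerivAt_x t ht ξ hξ)).const_mul E).sub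
        ((((hasDerivAt_id ξ).sub_const x₁).pow 2).const_mul μ)).congr_deriv ?_
      simp
    · have huxx : HasDerivAt ux uxx x := (hu.diff_xx t ht₀ x).hasDerivAt
      refine (((huxx.neg.sub (hΦ.hasDerivAt_xx t ht x hx)).const_mul E).sub
        ((((hasDerivAt_id x).sub_const x₁).const_mul 2).const_mul μ)).congr_deriv ?_
      simp
  have ht_test : 0 ≤ -2 * E * W + E * (-ut - Φt t x) := by
    refine hmax_t.hasDerivAt_nonneg_of_right ht.1 ?_
    have hut : HasDerivAt (fun s => u s x) ut t := (hu.diff_t t ht₀ x).hasDerivAt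
    refine ((((((hasDerivAt_id t).sub_const a).const_mul (-2)).exp).mul
      ((hut.const_sub 1).sub (hΦ.hasDerivAt_t t ht x hx))).sub_const _).congr_deriv ?_
    simp only [E, W, id, Pi.sub_apply]
    ring
  have hpde : ut = 1 / 2 * uxx + u t x ^ 2 - u t x := hu.pde t ht₀ x
  have hsuper := hΦ.le_deriv_t t ht x hx
  -- with `w = 1 - u`, `(w - w²) - (Φ - Φ²) = (w - Φ)(1 - w - Φ) ≤ w - Φ` as `w + Φ ≥ 0`
  have hreact : (u t x - u t x ^ 2) - (Φ t x - Φ t x ^ 2) ≤ W := by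
    nlinarith [hu.nonneg t ht₀ x]
  have hW : W ≤ 1 / 2 * (-uxx - Φxx t x) := by nlinarith
  calc E * W ≤ E * (1 / 2 * (-uxx - Φxx t x)) := mul_le_mul_of_nonneg_left hW hE.le
    _ ≤ μ := by linarith

theorem IsFKPPSolution.one_sub_le_of_supersolution {u : ℝ → ℝ → ℝ} (hu : IsFKPPSolution u)
    {a b : ℝ} (ha : 0 < a) {γ : ℝ → ℝ} (hγc : ContinuousOn γ (Icc a b))
    (hγm : MonotoneOn γ (Icc a b)) {Φ Φt Φx Φxx : ℝ → ℝ → ℝ}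
    (hΦ : IsKPPSupersolutionOn a b γ Φ Φt Φx Φxx)
    (hΦc : ContinuousOn (fun p : ℝ × ℝ => Φ p.1 p.2) {p | p.1 ∈ Icc a b ∧ γ p.1 ≤ p.2})
    (hΦ0 : ∀ t ∈ Icc a b, ∀ x, γ t ≤ x → 0 ≤ Φ t x)
    (hinit : ∀ x, γ a ≤ x → 1 - u a x ≤ Φ a x)
    (hbdry : ∀ t ∈ Icc a b, 1 - u t (γ t) ≤ Φ t (γ t)) :
    ∀ t ∈ Icc a b, ∀ x, γ t ≤ x → 1 - u t x ≤ Φ t x := by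
  intro t₁ ht₁ x₁ hx₁
  by_contra! hgap₁
  set W : ℝ × ℝ → ℝ := fun p => 1 - u p.1 p.2 - Φ p.1 p.2
  -- the weight `exp (-2 (t - a))` beats the reaction term, which grows `W` at rate at most `W`,
  -- and the penalty `μ (x - x₁)²` confines the maximum of `V` to a compact set
  set μ := exp (-2 * (b - a)) * W (t₁, x₁) / 2
  set V : ℝ × ℝ → ℝ := fun p => exp (-2 * (p.1 - a)) * W p - μ * (p.2 - x₁) ^ 2
  set R := √μ⁻¹
  set K := {p : ℝ × ℝ | (p.1 ∈ Icc a b ∧ γ p.1 ≤ p.2) ∧ p.2 ∈ Icc (x₁ - R) (x₁ + R)}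
  have hW₁ : 0 < W (t₁, x₁) := by simp only [W]; linarith
  have hμ : 0 < μ := by positivity
  have hVc : ContinuousOn V K := by
    refine ContinuousOn.sub (ContinuousOn.mul (by fun_prop) ?_) (by fun_prop)
    exact (continuousOn_const.sub (hu.cont.mono fun p hp => ha.trans_le hp.1.1.1)).sub
      (hΦc.mono fun p hp => hp.1)
  have hmem₁ : (t₁, x₁) ∈ K := ⟨⟨ht₁, hx₁⟩, by simp [R]⟩
  obtain ⟨⟨t, x⟩, ⟨⟨ht, hγx⟩, -⟩, hmax⟩ :=
    (isCompact_Icc_prod_inter_le hγc).exists_isMaxOn ⟨_, hmem₁⟩ hVc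
  have hVmax : 2 * μ ≤ exp (-2 * (t - a)) * W (t, x) - μ * (x - x₁) ^ 2 := by
    refine le_trans ?_ (hmax hmem₁)
    have : exp (-2 * (b - a)) ≤ exp (-2 * (t₁ - a)) := exp_le_exp.2 (by linarith [ht₁.2])
    simp only [V, μ, sub_self]
    nlinarith
  have hWpos : 0 < W (t, x) := by nlinarith [exp_pos (-2 * (t - a)), sq_nonneg (x - x₁)]
  have hat : a < t := by
    refine ht.1.lt_of_ne fun h => ?_
    subst h
    have := hinit x hγx
    simp only [W] at hWpos
    linarith
  have hγlt : γ t < x := by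
    refine hγx.lt_of_ne fun h => ?_
    have := hbdry t ht
    rw [h] at this
    simp only [W] at hWpos
    linarith
  have hxR : |x - x₁| < R := by
    have : W (t, x) ≤ 1 := by
      have := hΦ0 t ht x hγx; have := hu.nonneg t (ha.trans_le ht.1) x
      simp only [W]; linarith
    have : exp (-2 * (t - a)) ≤ 1 := exp_le_one_iff.2 (by linarith)
    refine abs_lt_of_sq_lt_sq ?_ (sqrt_nonneg _)
    rw [sq_sqrt (inv_nonneg.2 hμ.le), inv_eq_one_div, lt_div_iff₀ hμ]
    nlinarith [exp_pos (-2 * (t - a))]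
  obtain ⟨hmax_x, hmax_t⟩ := hmax.isLocalMax_and_isMaxOn_slices hγm ht hγlt
    (by linarith [(abs_lt.1 hxR).1]) (by linarith [(abs_lt.1 hxR).2])
  have := hu.weighted_gap_le_of_isMax ha.le hΦ ⟨hat, ht.2⟩ hγlt (hΦ0 t ht x hγx)
    (by simp only [W] at hWpos; linarith) hmax_x hmax_t
  nlinarith [sq_nonneg (x - x₁)]

theorem isKPPSupersolutionOn_exp (a b : ℝ) (γ : ℝ → ℝ) (ε k t₀ x₀ : ℝ) :
    IsKPPSupersolutionOn a b γ
      (fun s y => ε * exp (s - t₀) + exp (-k * (y - x₀) + (k ^ 2 / 2 + 1) * (s - t₀)))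
      (fun s y => ε * exp (s - t₀)
        + (k ^ 2 / 2 + 1) * exp (-k * (y - x₀) + (k ^ 2 / 2 + 1) * (s - t₀)))
      (fun s y => -k * exp (-k * (y - x₀) + (k ^ 2 / 2 + 1) * (s - t₀)))
      (fun s y => k ^ 2 * exp (-k * (y - x₀) + (k ^ 2 / 2 + 1) * (s - t₀))) := by
  have hlin : ∀ s y, HasDerivAt (fun y => -k * (y - x₀) + (k ^ 2 / 2 + 1) * (s - t₀)) (-k) y :=
    fun s y => by
      simpa using (((hasDerivAt_id y).sub_const x₀).const_mul (-k)).add_const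
        ((k ^ 2 / 2 + 1) * (s - t₀))
  refine ⟨fun s _ y _ => ?_, fun s _ y _ => ?_, fun s _ y _ => ?_, fun s _ y _ => ?_⟩
  · refine ((((hasDerivAt_id s).sub_const t₀).exp.const_mul ε).add
      ((((hasDerivAt_id s).sub_const t₀).const_mul (k ^ 2 / 2 + 1)).const_add
        (-k * (y - x₀))).exp).congr_deriv ?_
    simp only [id]; ring
  · refine ((hasDerivAt_const y _).add (hlin s y).exp).congr_deriv ?_
    ring
  · refine ((hlin s y).exp.const_mul (-k)).congr_deriv ?_
    ring
  · nlinarith [sq_nonneg (ε * exp (s - t₀) + exp (-k * (y - x₀) + (k ^ 2 / 2 + 1) * (s - t₀))),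
      exp_pos (-k * (y - x₀) + (k ^ 2 / 2 + 1) * (s - t₀))]

theorem IsFKPPSolution.one_sub_le_add_exp {u : ℝ → ℝ → ℝ} (hu : IsFKPPSolution u)
    {t₀ t x₀ k : ℝ} (ht₀ : 0 < t₀) (ht : t₀ ≤ t) (hk : 0 ≤ k) (x : ℝ) :
    1 - u t x ≤ (1 - u t₀ x₀) * exp (t - t₀)
      + exp (-k * (x - x₀) + (k ^ 2 / 2 + 1) * (t - t₀)) := by
  set ε := 1 - u t₀ x₀
  set G : ℝ → ℝ → ℝ := fun s y => exp (-k * (y - x₀) + (k ^ 2 / 2 + 1) * (s - t₀))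
  have hG1 : ∀ s, t₀ ≤ s → ∀ y, y ≤ x₀ → 1 ≤ G s y := fun s hs y hy =>
    one_le_exp (by nlinarith)
  have hε : 0 ≤ ε := by have := hu.le_one t₀ ht₀ x₀; simp only [ε]; linarith
  rcases le_or_gt x x₀ with hx | hx
  · have := hu.nonneg t (ht₀.trans_le ht) x
    have := hG1 t ht x hx
    nlinarith [exp_pos (t - t₀)]
  refine hu.one_sub_le_of_supersolution ht₀ continuousOn_const monotoneOn_const
    (isKPPSupersolutionOn_exp t₀ t _ ε k t₀ x₀) (by fun_prop) (fun s _ y _ => by positivity)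
    (fun y hy => ?_) (fun s hs => ?_) t ⟨ht, le_rfl⟩ x hx.le
  · have : u t₀ x₀ ≤ u t₀ y := hu.mono t₀ ht₀ hy
    simp only [sub_self, exp_zero, mul_one]
    linarith [exp_pos (-k * (y - x₀) + (k ^ 2 / 2 + 1) * 0)]
  · have := hu.nonneg s (ht₀.trans_le hs.1) x₀
    have := hG1 s hs.1 x₀ le_rfl
    nlinarith [exp_pos (s - t₀)]

theorem IsFKPPSolution.one_sub_le_exp {u : ℝ → ℝ → ℝ} (hu : IsFKPPSolution u) {t k : ℝ}
    (ht : 0 < t) (hk : 0 ≤ k) (x : ℝ) : 1 - u t x ≤ exp (-k * x + (k ^ 2 / 2 + 1) * t) := by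
  have hshift : ∀ x₀ > 0, 1 - u t x ≤ exp (-k * (x - x₀) + (k ^ 2 / 2 + 1) * t) := by
    intro x₀ hx₀
    have hlim : Tendsto (fun s => (1 - u s x₀) * exp (t - s)
        + exp (-k * (x - x₀) + (k ^ 2 / 2 + 1) * (t - s))) (𝓝[>] 0)
        (𝓝 ((1 - 1) * exp (t - 0) + exp (-k * (x - x₀) + (k ^ 2 / 2 + 1) * (t - 0)))) :=
      ((tendsto_const_nhds.sub (hu.init_pos x₀ hx₀)).mul
        ((continuous_exp.comp (continuous_sub_left t)).continuousAt.tendsto.mono_left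
          nhdsWithin_le_nhds)).add
      ((continuous_exp.comp (by fun_prop)).continuousAt.tendsto.mono_left nhdsWithin_le_nhds)
    simp only [sub_self, zero_mul, sub_zero, zero_add] at hlim
    refine ge_of_tendsto hlim ?_
    filter_upwards [Ioo_mem_nhdsGT ht] with s hs using hu.one_sub_le_add_exp hs.1 hs.2.le hk x
  have hlim : Tendsto (fun x₀ => exp (-k * (x - x₀) + (k ^ 2 / 2 + 1) * t)) (𝓝[>] 0)
      (𝓝 (exp (-k * (x - 0) + (k ^ 2 / 2 + 1) * t))) :=
    (continuous_exp.comp (by fun_prop)).continuousAt.tendsto.mono_left nhdsWithin_le_nhds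
  rw [sub_zero] at hlim
  exact ge_of_tendsto hlim (eventually_nhdsWithin_of_forall hshift)

theorem IsFKPPSolution.one_sub_le_gaussian {u : ℝ → ℝ → ℝ} (hu : IsFKPPSolution u) {t x : ℝ}
    (ht : 0 < t) (hx : 0 ≤ x) : 1 - u t x ≤ exp (t - x ^ 2 / (2 * t)) := by
  convert hu.one_sub_le_exp ht (div_nonneg hx ht.le) x using 2
  field_simp
  ring

theorem sqrt_sixteen : √(16 : ℝ) = 4 := by
  rw [show (16 : ℝ) = 4 ^ 2 by norm_num, sqrt_sq (by norm_num)]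

theorem exp_five_le : exp 5 ≤ 300 := by
  have h : exp 5 = exp 1 ^ 5 := by rw [← exp_nat_mul]; norm_num
  rw [h]
  calc exp 1 ^ 5 ≤ 3 ^ 5 := by gcongr; exact exp_one_lt_three.le
    _ ≤ 300 := by norm_num

theorem exp_six_mem_Ioo : exp 6 ∈ Ioo 400 404 := by
  have h : exp 6 = exp 1 ^ 6 := by rw [← exp_nat_mul]; norm_num
  rw [h]
  constructor
  · calc (400 : ℝ) < 2.7182818283 ^ 6 := by norm_num
      _ < exp 1 ^ 6 := by gcongr; exact exp_one_gt_d9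
  · calc exp 1 ^ 6 < 2.7182818286 ^ 6 := by gcongr; exact exp_one_lt_d9
      _ < 404 := by norm_num

theorem inv_sqrt_two_mem_Icc : (√2)⁻¹ ∈ Icc (0.707 : ℝ) 0.708 := by
  have h₁ : (1.4142 : ℝ) ≤ √2 := le_sqrt_of_sq_le (by norm_num)
  have h₂ : √2 ≤ 1.4143 := (sqrt_le_left (by norm_num)).2 (by norm_num)
  constructor
  · rw [le_inv_comm₀ (by norm_num) (by positivity)]; linarith
  · rw [inv_le_comm₀ (by positivity) (by norm_num)]; linarith

theorem hasDerivAt_gaussian_comp {τ σ : ℝ → ℝ} {τ' σ' r : ℝ} (c : ℝ) (hτ : HasDerivAt τ τ' r)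
    (hσ : HasDerivAt σ σ' r) (hτ0 : c * τ r ≠ 0) :
    HasDerivAt (fun r => exp (-σ r ^ 2 / (c * τ r)))
      (exp (-σ r ^ 2 / (c * τ r)) * (σ r ^ 2 * τ' / (c * τ r ^ 2) - 2 * σ r * σ' / (c * τ r)))
      r := by
  refine (((hσ.pow 2).neg.div (hτ.const_mul c) hτ0).exp).congr_deriv ?_
  have : τ r ≠ 0 := right_ne_zero_of_mul hτ0
  have : c ≠ 0 := left_ne_zero_of_mul hτ0
  simp only [Pi.div_apply, Pi.neg_apply, Pi.pow_apply]
  congr 1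
  field_simp
  ring

namespace Bramson

noncomputable def centering (t : ℝ) : ℝ := √2 * t - 3 / (2 * √2) * log t

noncomputable def centeringDeriv (t : ℝ) : ℝ := √2 - 3 / (2 * √2 * t)

noncomputable def amplitude (t : ℝ) : ℝ := exp (150 - 600 / √t)

noncomputable def profile (t S : ℝ) : ℝ :=
  2000 * S * exp (-S ^ 2 / (2 * t)) + 300 * exp (-S ^ 2 / (4 * t))

noncomputable def profileDS (t S : ℝ) : ℝ :=
  2000 * (1 - S ^ 2 / t) * exp (-S ^ 2 / (2 * t)) - 300 * (S / (2 * t)) * exp (-S ^ 2 / (4 * t))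

noncomputable def profileDSS (t S : ℝ) : ℝ :=
  2000 * (S ^ 3 / t ^ 2 - 3 * S / t) * exp (-S ^ 2 / (2 * t))
    + 300 * (S ^ 2 / (4 * t ^ 2) - 1 / (2 * t)) * exp (-S ^ 2 / (4 * t))

noncomputable def profileDt (t S : ℝ) : ℝ :=
  2000 * S * (S ^ 2 / (2 * t ^ 2)) * exp (-S ^ 2 / (2 * t))
    + 300 * (S ^ 2 / (4 * t ^ 2)) * exp (-S ^ 2 / (4 * t))

theorem hasDerivAt_profile_comp {τ σ : ℝ → ℝ} {τ' σ' r : ℝ} (hτ : HasDerivAt τ τ' r)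
    (hσ : HasDerivAt σ σ' r) (hτ0 : τ r ≠ 0) :
    HasDerivAt (fun r => profile (τ r) (σ r))
      (profileDt (τ r) (σ r) * τ' + profileDS (τ r) (σ r) * σ') r := by
  have h₂ := hasDerivAt_gaussian_comp 2 hτ hσ (by positivity)
  have h₄ := hasDerivAt_gaussian_comp 4 hτ hσ (by positivity)
  refine (((hσ.const_mul 2000).mul h₂).add (h₄.const_mul 300)).congr_deriv ?_
  simp only [profileDt, profileDS]
  generalize exp (-σ r ^ 2 / (2 * τ r)) = e₂
  generalize exp (-σ r ^ 2 / (4 * τ r)) = e₄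
  field_simp
  ring

theorem hasDerivAt_profile {t : ℝ} (ht : t ≠ 0) (S : ℝ) :
    HasDerivAt (profile t) (profileDS t S) S := by
  simpa using hasDerivAt_profile_comp (hasDerivAt_const S t) (hasDerivAt_id S) ht

theorem hasDerivAt_profileDS {t : ℝ} (ht : t ≠ 0) (S : ℝ) :
    HasDerivAt (profileDS t) (profileDSS t S) S := by
  have h₂ := hasDerivAt_gaussian_comp 2 (hasDerivAt_const S t) (hasDerivAt_id S) (by positivity)
  have h₄ := hasDerivAt_gaussian_comp 4 (hasDerivAt_const S t) (hasDerivAt_id S) (by positivity)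
  refine ((((((hasDerivAt_id S).pow 2).div_const t).const_sub 1).const_mul 2000).mul h₂ |>.sub
    ((((hasDerivAt_id S).div_const (2 * t)).const_mul 300).mul h₄)).congr_deriv ?_
  simp only [profileDSS, Pi.pow_apply, id]
  generalize exp (-S ^ 2 / (2 * t)) = e₂
  generalize exp (-S ^ 2 / (4 * t)) = e₄
  field_simp
  ring

theorem hasDerivAt_centering {t : ℝ} (ht : 0 < t) : HasDerivAt centering (centeringDeriv t) t := by
  refine (((hasDerivAt_id t).const_mul √2).sub ((hasDerivAt_log ht.ne').const_mul _)).congr_deriv ?_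
  simp only [centeringDeriv]
  field_simp

theorem hasDerivAt_amplitude {t : ℝ} (ht : 0 < t) :
    HasDerivAt amplitude (amplitude t * (300 / (t * √t))) t := by
  have hs : √t ≠ 0 := (sqrt_pos.2 ht).ne'
  refine ((((hasDerivAt_sqrt ht.ne').inv hs).const_mul 600).const_sub 150).exp.congr_deriv ?_
  simp only [amplitude]
  congr 1
  field_simp
  rw [sq_sqrt ht.le]
  ring

noncomputable def barrier (t x : ℝ) : ℝ :=
  amplitude t * profile t (x - centering t + 2) * exp (-√2 * (x - centering t))

noncomputable def barrierDx (t x : ℝ) : ℝ :=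
  amplitude t * (profileDS t (x - centering t + 2) - √2 * profile t (x - centering t + 2))
    * exp (-√2 * (x - centering t))

noncomputable def barrierDxx (t x : ℝ) : ℝ :=
  amplitude t * (profileDSS t (x - centering t + 2) - 2 * √2 * profileDS t (x - centering t + 2)
    + 2 * profile t (x - centering t + 2)) * exp (-√2 * (x - centering t))

noncomputable def barrierDt (t x : ℝ) : ℝ :=
  amplitude t * (300 / (t * √t) * profile t (x - centering t + 2)
    + profileDt t (x - centering t + 2) - centeringDeriv t * profileDS t (x - centering t + 2)
    + √2 * centeringDeriv t * profile t (x - centering t + 2)) * exp (-√2 * (x - centering t))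

theorem hasDerivAt_barrier_x {t : ℝ} (ht : 0 < t) (x : ℝ) :
    HasDerivAt (barrier t) (barrierDx t x) x := by
  have hS : HasDerivAt (fun ξ => ξ - centering t + 2) 1 x :=
    ((hasDerivAt_id x).sub_const _).add_const _
  refine (((hasDerivAt_profile ht.ne' _).comp x hS).const_mul (amplitude t) |>.mul
    (((hasDerivAt_id x).sub_const _).const_mul (-√2)).exp).congr_deriv ?_
  simp only [barrierDx, Function.comp_apply, id]
  ring

theorem hasDerivAt_barrierDx_x {t : ℝ} (ht : 0 < t) (x : ℝ) :
    HasDerivAt (barrierDx t) (barrierDxx t x) x := by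
  have hS : HasDerivAt (fun ξ => ξ - centering t + 2) 1 x :=
    ((hasDerivAt_id x).sub_const _).add_const _
  refine ((((hasDerivAt_profileDS ht.ne' _).comp x hS).sub
    (((hasDerivAt_profile ht.ne' _).comp x hS).const_mul √2)).const_mul (amplitude t) |>.mul
    (((hasDerivAt_id x).sub_const _).const_mul (-√2)).exp).congr_deriv ?_
  simp only [barrierDxx, Function.comp_apply, Pi.sub_apply, id]
  linear_combination (amplitude t * profile t (x - centering t + 2)
    * exp (-√2 * (x - centering t))) * sq_sqrt (zero_le_two (α := ℝ))

theorem hasDerivAt_barrier_t {t : ℝ} (ht : 0 < t) (x : ℝ) :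
    HasDerivAt (fun s => barrier s x) (barrierDt t x) t := by
  have hc := hasDerivAt_centering ht
  refine ((hasDerivAt_amplitude ht).mul (hasDerivAt_profile_comp (hasDerivAt_id t)
    ((hc.const_sub x).add_const 2) ht.ne') |>.mul
    ((hc.const_sub x).const_mul (-√2)).exp).congr_deriv ?_
  simp only [barrierDt, Pi.mul_apply, id]
  ring

noncomputable def defect (t S : ℝ) : ℝ :=
  300 / (t * √t) * profile t S + 3 / (2 * √2 * t) * profileDS t S
    + 300 * (S ^ 2 / (8 * t ^ 2) - 5 / (4 * t)) * exp (-S ^ 2 / (4 * t))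

theorem profileDt_sub_profileDSS {t : ℝ} (ht : t ≠ 0) (S : ℝ) :
    profileDt t S - 1 / 2 * profileDSS t S - 3 / (2 * t) * profile t S
      = 300 * (S ^ 2 / (8 * t ^ 2) - 5 / (4 * t)) * exp (-S ^ 2 / (4 * t)) := by
  simp only [profileDt, profileDSS, profile]
  field_simp
  ring

theorem barrierDt_sub_barrierDxx {t : ℝ} (ht : t ≠ 0) (x : ℝ) :
    barrierDt t x - 1 / 2 * barrierDxx t x - barrier t x
      = amplitude t * defect t (x - centering t + 2) * exp (-√2 * (x - centering t)) := by
  have h₁ : √2 ^ 2 = 2 := sq_sqrt zero_le_two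
  have h₂ : √2 * (√2)⁻¹ = 1 := mul_inv_cancel₀ (by positivity)
  set S := x - centering t + 2
  set A := amplitude t
  set E := exp (-√2 * (x - centering t))
  simp only [barrierDt, barrierDxx, barrier, defect, centeringDeriv]
  linear_combination (A * E) * profileDt_sub_profileDSS ht S + (A * E * profile t S) * h₁
    - (3 / 2 * A * E * profile t S / t) * h₂

theorem defect_poly_nonneg {T S q c : ℝ} (hT : 4 ≤ T) (hS : 0 < S) (hq : 0 < q)
    (hc : 0.707 ≤ c) (hc' : c ≤ 0.708)
    (h₁ : S ^ 2 ≤ T ^ 2 / 2 → 7 / 8 ≤ q) (h₂ : S ^ 2 ≤ 24 * T ^ 2 → 1 / 404 ≤ q)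
    (h₃ : 24 * T ^ 2 ≤ S ^ 2 → q ≤ 1 / 400) :
    0 ≤ 48000 * T * S * q + 7200 * T + 240 * c * q * (T ^ 2 - S ^ 2) + 3 * S ^ 2 - 30 * T ^ 2
      - 18 * c * S := by
  have hcS : c * S ≤ 0.708 * S := by nlinarith
  have hcqT : 0 ≤ c * q * T ^ 2 := by positivity
  have hTSq : 0 ≤ T * S * q := by positivity
  rcases le_total (S ^ 2) (T ^ 2 / 2) with hA | hA
  · have hq' := h₁ hA
    have hST : S ≤ T := by nlinarith
    have hcq : 0.707 * (7 / 8) ≤ c * q := by nlinarith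
    nlinarith [mul_le_mul_of_nonneg_right hcq (by nlinarith : (0:ℝ) ≤ T ^ 2 - S ^ 2)]
  rcases le_total (S ^ 2) (24 * T ^ 2) with hB | hB
  · have hq' := h₂ hB
    have hST : T ≤ 2 * S := by nlinarith
    have hST' : S ≤ 5 * T := by nlinarith
    have hmain : 47000 * T ≤ 48000 * T - 240 * c * S := by nlinarith
    have h1 : 47000 * T * (q * S) ≤ (48000 * T - 240 * c * S) * (q * S) :=
      mul_le_mul_of_nonneg_right hmain (by positivity)
    have h2 : T * S / 404 ≤ T * S * q := by nlinarith [mul_pos (by linarith : (0:ℝ) < T) hS]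
    have h3 : T ^ 2 / 2 ≤ T * S := by nlinarith
    nlinarith
  · have hq' := h₃ hB
    have hST : 19 ≤ S := by nlinarith
    have hcq : c * q ≤ 0.708 / 400 := by nlinarith
    nlinarith [mul_le_mul_of_nonneg_right hcq (sq_nonneg S)]

theorem defect_nonneg {t S : ℝ} (ht : 16 ≤ t) (hS : 0 < S) : 0 ≤ defect t S := by
  set T := √t with hT
  have hT4 : 4 ≤ T := sqrt_sixteen ▸ sqrt_le_sqrt ht
  have htT : t = T ^ 2 := (sq_sqrt (by linarith)).symm
  set q := exp (-S ^ 2 / (4 * t)) with hq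
  have hq2 : exp (-S ^ 2 / (2 * t)) = q ^ 2 := by
    rw [hq, ← exp_nat_mul]; congr 1; field_simp; norm_num
  have hqS : q = exp (-(S ^ 2 / (4 * T ^ 2))) := by rw [hq, htT, neg_div]
  have hT0 : 0 < T := by linarith
  have hq₁ : S ^ 2 ≤ T ^ 2 / 2 → 7 / 8 ≤ q := fun h => by
    have : S ^ 2 / (4 * T ^ 2) ≤ 1 / 8 := by rw [div_le_iff₀ (by positivity)]; linarith
    linarith [hqS ▸ add_one_le_exp (-(S ^ 2 / (4 * T ^ 2)))]
  have hq₂ : S ^ 2 ≤ 24 * T ^ 2 → 1 / 404 ≤ q := fun h => by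
    have : S ^ 2 / (4 * T ^ 2) ≤ 6 := by rw [div_le_iff₀ (by positivity)]; linarith
    calc 1 / 404 ≤ (exp 6)⁻¹ := by rw [one_div]; exact inv_anti₀ (exp_pos 6) exp_six_mem_Ioo.2.le
      _ ≤ q := by rw [← exp_neg, hqS]; exact exp_le_exp.2 (by linarith)
  have hq₃ : 24 * T ^ 2 ≤ S ^ 2 → q ≤ 1 / 400 := fun h => by
    have : 6 ≤ S ^ 2 / (4 * T ^ 2) := by rw [le_div_iff₀ (by positivity)]; linarith
    calc q ≤ (exp 6)⁻¹ := by rw [← exp_neg, hqS]; exact exp_le_exp.2 (by linarith)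
      _ ≤ 1 / 400 := by rw [one_div]; exact inv_anti₀ (by norm_num) exp_six_mem_Ioo.1.le
  have hPoly := defect_poly_nonneg hT4 hS (exp_pos _) inv_sqrt_two_mem_Icc.1
    inv_sqrt_two_mem_Icc.2 hq₁ hq₂ hq₃
  have hkey : defect t S * (8 * T ^ 4) = 100 * q * (48000 * T * S * q + 7200 * T
      + 240 * (√2)⁻¹ * q * (T ^ 2 - S ^ 2) + 3 * S ^ 2 - 30 * T ^ 2 - 18 * (√2)⁻¹ * S) := by
    simp only [defect, profile, profileDS]
    rw [← hq, hq2, ← hT]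
    clear_value T q
    subst htT
    field_simp
    ring
  refine le_of_mul_le_mul_right ?_ (by positivity : (0 : ℝ) < 8 * T ^ 4)
  rw [zero_mul, hkey]
  exact mul_nonneg (by positivity) hPoly

theorem barrier_supersolution {t x : ℝ} (ht : 16 ≤ t) (hx : centering t < x) :
    1 / 2 * barrierDxx t x + barrier t x - barrier t x ^ 2 ≤ barrierDt t x := by
  have h := barrierDt_sub_barrierDxx (t := t) (by positivity) x
  have : 0 ≤ amplitude t * defect t (x - centering t + 2) * exp (-√2 * (x - centering t)) :=
    mul_nonneg (mul_nonneg (exp_pos _).le (defect_nonneg ht (by linarith))) (exp_pos _).le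
  nlinarith [sq_nonneg (barrier t x)]

theorem amplitude_sixteen : amplitude 16 = 1 := by
  rw [amplitude, sqrt_sixteen]; norm_num

theorem one_le_amplitude {t : ℝ} (ht : 16 ≤ t) : 1 ≤ amplitude t := by
  have h4 : 4 ≤ √t := sqrt_sixteen ▸ sqrt_le_sqrt ht
  refine one_le_exp ?_
  rw [sub_nonneg, div_le_iff₀ (by positivity)]
  linarith

theorem amplitude_le {t : ℝ} (ht : 0 < t) : amplitude t ≤ exp 150 := by
  have : 0 < 600 / √t := by positivity
  exact exp_le_exp.2 (by linarith)

theorem one_le_barrier_centering {t : ℝ} (ht : 16 ≤ t) : 1 ≤ barrier t (centering t) := by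
  have he : 15 / 16 ≤ exp (-2 ^ 2 / (4 * t)) := by
    have : 1 / t ≤ 1 / 16 := one_div_le_one_div_of_le (by norm_num) ht
    have : -2 ^ 2 / (4 * t) = -(1 / t) := by field_simp; norm_num
    linarith [add_one_le_exp (-2 ^ 2 / (4 * t))]
  have hA := one_le_amplitude ht
  simp only [barrier, profile, sub_self, zero_add, mul_zero, exp_zero, mul_one]
  nlinarith [exp_pos (-2 ^ 2 / (2 * t))]

theorem barrier_centering_add_le {t y : ℝ} (ht : 0 < t) (hy : 0 ≤ y) :
    barrier t (centering t + y) ≤ 2300 * exp 150 * (y + 2) * exp (-√2 * y) := by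
  have he : ∀ c > 0, exp (-(y + 2) ^ 2 / (c * t)) ≤ 1 := fun c hc =>
    exp_le_one_iff.2 (div_nonpos_of_nonpos_of_nonneg (by nlinarith) (by positivity))
  have hprof : profile t (y + 2) ≤ 2300 * (y + 2) := by
    have := he 2 two_pos; have := he 4 four_pos
    unfold profile
    nlinarith
  have hprof₀ : 0 ≤ profile t (y + 2) := by unfold profile; positivity
  simp only [barrier, add_sub_cancel_left]
  calc amplitude t * profile t (y + 2) * exp (-√2 * y)
      ≤ exp 150 * (2300 * (y + 2)) * exp (-√2 * y) := by gcongr; exact amplitude_le ht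
    _ = 2300 * exp 150 * (y + 2) * exp (-√2 * y) := by ring

theorem continuousOn_barrier : ContinuousOn (fun p : ℝ × ℝ => barrier p.1 p.2) {p | 0 < p.1} := by
  intro p (hp : 0 < p.1)
  refine ContinuousAt.continuousWithinAt ?_
  simp only [barrier, amplitude, profile, centering]
  fun_prop (disch := positivity)

theorem barrier_nonneg {t x : ℝ} (hx : centering t - 2 ≤ x) : 0 ≤ barrier t x := by
  have : 0 ≤ x - centering t + 2 := by linarith
  unfold barrier profile amplitude
  positivity

theorem monotoneOn_centering : MonotoneOn centering (Ici 1) := by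
  intro s (hs : 1 ≤ s) t (ht : 1 ≤ t) hst
  have hlog : log t - log s ≤ t - s := by
    rw [← log_div (by positivity) (by positivity)]
    calc log (t / s) ≤ t / s - 1 := log_le_sub_one_of_pos (by positivity)
      _ = (t - s) / s := by field_simp
      _ ≤ t - s := div_le_self (by linarith) hs
  have hc : 3 / (2 * √2) ≤ √2 := by
    rw [div_le_iff₀ (by positivity)]
    nlinarith [sq_sqrt (zero_le_two (α := ℝ))]
  have hc₀ : 0 ≤ 3 / (2 * √2) := by positivity
  unfold centering
  nlinarith [mul_le_mul_of_nonneg_left hlog hc₀, mul_le_mul_of_nonneg_right hc (sub_nonneg.2 hst)]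

theorem centering_sixteen_ge : 19.686 ≤ centering 16 := by
  have hr : (1.414213 : ℝ) ≤ √2 := le_sqrt_of_sq_le (by norm_num)
  have hl := log_two_lt_d9
  have h : centering 16 = √2 * (16 - 3 * log 2) := by
    have : log 16 = 4 * log 2 := by
      rw [show (16 : ℝ) = 2 ^ 4 by norm_num, log_pow]; norm_num
    have h2 : √2 ^ 2 = 2 := sq_sqrt zero_le_two
    rw [centering, this]
    field_simp
    linear_combination 6 * log 2 * h2
  rw [h]
  nlinarith

end Bramson

open Bramson in
theorem IsFKPPSolution.one_sub_le_barrier_sixteen {u : ℝ → ℝ → ℝ} (hu : IsFKPPSolution u)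
    {z : ℝ} (hz : centering 16 ≤ z) : 1 - u 16 z ≤ barrier 16 z := by
  set y := z - centering 16
  have hy : 0 ≤ y := sub_nonneg.2 hz
  have hM := centering_sixteen_ge
  have hr : √2 ≤ 1.41422 := (sqrt_le_left (by norm_num)).2 (by norm_num)
  have hexp : 16 - z ^ 2 / (2 * 16) ≤ 5 + (-(y + 2) ^ 2 / (4 * 16) + -√2 * y) := by
    have hz' : z = centering 16 + y := by ring
    rw [hz']
    nlinarith [sq_nonneg (y - 7.9), mul_nonneg hy (sub_nonneg.2 hM), mul_nonneg hy hy]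
  calc 1 - u 16 z ≤ exp (16 - z ^ 2 / (2 * 16)) :=
        hu.one_sub_le_gaussian (by norm_num) (by linarith)
    _ ≤ exp 5 * (exp (-(y + 2) ^ 2 / (4 * 16)) * exp (-√2 * y)) := by
        rw [← exp_add, ← exp_add]; exact exp_le_exp.2 hexp
    _ ≤ 300 * (exp (-(y + 2) ^ 2 / (4 * 16)) * exp (-√2 * y)) := by gcongr; exact exp_five_le
    _ ≤ barrier 16 z := by
        have : 0 ≤ 2000 * (y + 2) * exp (-(y + 2) ^ 2 / (2 * 16)) := by positivity
        simp only [barrier, profile, amplitude_sixteen, one_mul]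
        rw [show z - centering 16 + 2 = y + 2 by ring]
        nlinarith [exp_pos (-√2 * y)]

open Bramson in
theorem IsFKPPSolution.one_sub_le_barrier {u : ℝ → ℝ → ℝ} (hu : IsFKPPSolution u) {t x : ℝ}
    (ht : 16 ≤ t) (hx : centering t ≤ x) : 1 - u t x ≤ barrier t x := by
  have hpos : ∀ s ∈ Ioc 16 t, 0 < s := fun s hs => by linarith [hs.1]
  have hsuper : IsKPPSupersolutionOn 16 t centering barrier barrierDt barrierDx barrierDxx :=
    ⟨fun s hs x _ => hasDerivAt_barrier_t (hpos s hs) x,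
      fun s hs x _ => hasDerivAt_barrier_x (hpos s hs) x,
      fun s hs x _ => hasDerivAt_barrierDx_x (hpos s hs) x,
      fun s hs x hx => barrier_supersolution hs.1.le hx⟩
  have hbdry : ∀ s ∈ Icc 16 t, 1 - u s (centering s) ≤ barrier s (centering s) := fun s hs => by
    have := hu.nonneg s (by linarith [hs.1]) (centering s)
    linarith [one_le_barrier_centering hs.1]
  exact hu.one_sub_le_of_supersolution (by norm_num)
    (fun s hs => (hasDerivAt_centering (by linarith [hs.1])).continuousAt.continuousWithinAt)
    (monotoneOn_centering.mono fun s hs => (by norm_num : (1 : ℝ) ≤ 16).trans hs.1) hsuper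
    (continuousOn_barrier.mono fun p hp => (by norm_num : (0 : ℝ) < 16).trans_le hp.1.1)
    (fun s _ x hx => barrier_nonneg (by linarith)) (fun z hz => hu.one_sub_le_barrier_sixteen hz)
    hbdry t ⟨ht, le_rfl⟩ x hx

theorem one_le_bramson_bound {y : ℝ} (hy₀ : 0 ≤ y) (hy₄ : y ≤ 4) :
    1 ≤ 2300 * exp 150 * (y + 2) ^ 4 * exp (-√2 * y) := by
  have hr : √2 ≤ 2 := (sqrt_le_left (by norm_num)).2 (by norm_num)
  have h₁ : 1 ≤ 2300 * (y + 2) ^ 4 := by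
    nlinarith [pow_le_pow_left₀ zero_le_two (by linarith : 2 ≤ y + 2) 4]
  calc (1 : ℝ) ≤ exp (150 + -8) := one_le_exp (by norm_num)
    _ = exp 150 * exp (-8) := exp_add _ _
    _ ≤ exp 150 * exp (-√2 * y) := by gcongr; nlinarith
    _ = 1 * (exp 150 * exp (-√2 * y)) := (one_mul _).symm
    _ ≤ 2300 * (y + 2) ^ 4 * (exp 150 * exp (-√2 * y)) := by gcongr
    _ = 2300 * exp 150 * (y + 2) ^ 4 * exp (-√2 * y) := by ring

/-- **Upper bound for Bramson's theorem.** There is `C₅ > 0` such that for `t ≥ 1` and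
`y ∈ [0, √t]`, `P(M_t > √2·t − (3/(2√2))·log t + y) ≤ C₅·(y+2)⁴·e^{−√2·y}`, i.e.
`u(t, √2·t − (3/(2√2))·log t + y) ≥ 1 − C₅·(y+2)⁴·e^{−√2·y}`. -/
theorem bramson_upper (u : ℝ → ℝ → ℝ) (hu : IsFKPPSolution u) :
    ∃ C₅ > (0:ℝ), ∀ t ≥ (1:ℝ), ∀ y ∈ Icc (0:ℝ) (Real.sqrt t),
      u t (Real.sqrt 2 * t - 3 / (2 * Real.sqrt 2) * Real.log t + y)
        ≥ 1 - C₅ * (y + 2)^4 * Real.exp (-(Real.sqrt 2) * y) := by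
  refine ⟨2300 * exp 150, by positivity, fun t ht y ⟨hy₀, hyt⟩ => sub_le_comm.1 ?_⟩
  change 1 - u t (Bramson.centering t + y) ≤ _
  rcases le_or_gt 16 t with h16 | h16
  · calc 1 - u t (Bramson.centering t + y) ≤ Bramson.barrier t (Bramson.centering t + y) :=
          hu.one_sub_le_barrier h16 (by linarith)
      _ ≤ 2300 * exp 150 * (y + 2) * exp (-√2 * y) :=
          Bramson.barrier_centering_add_le (by linarith) hy₀
      _ ≤ 2300 * exp 150 * (y + 2) ^ 4 * exp (-√2 * y) := by
          gcongr; exact le_self_pow₀ (by linarith) (by norm_num)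
  · have hy₄ : y ≤ 4 := hyt.trans (sqrt_sixteen ▸ sqrt_le_sqrt h16.le)
    have := hu.nonneg t (by linarith) (Bramson.centering t + y)
    linarith [one_le_bramson_bound hy₀ hy₄]
end

section
/- There exists a constant c > 0 such that for all t ≥ 2, ∫_{1}^{t−1} e^{−(3·log t/(2t))·s} · s^{−3/2} · (t−s)^{−3} ds ≤ c·t^{−3}. -/
/-!
With `β = 3 log t / (2t)` one has `e^{-βt} = t^{-3/2}`. On `s ≤ t/2` the factor `(t-s)^{-3}` is
already of order `t^{-3}` and `∫ s^{-3/2}` converges. On `s ≥ t/2`, writing `u = t - s`, both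
`e^{-βs} = t^{-3/2} e^{βu}` and `s^{-3/2}` contribute `t^{-3/2}`, and for `1 ≤ u ≤ t/2`
`e^{βu} ≤ 1 + βu e^{βu} ≤ 1 + βu t^{3/4} ≤ 7u` because `β t^{3/4} ≤ 6`; what is left is the
convergent `∫ u^{-2}`.
-/

open Real Set intervalIntegral

theorem Real.exp_le_one_add_mul_exp (x : ℝ) : exp x ≤ 1 + x * exp x := by
  have h := mul_le_mul_of_nonneg_left (add_one_le_exp (-x)) (exp_pos x).le
  rw [← exp_add, add_neg_cancel, exp_zero] at h
  linarith

theorem Real.rpow_neg_le_two_rpow_mul {t x p : ℝ} (ht : 0 < t) (hx : t / 2 ≤ x) (hp : 0 ≤ p) :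
    x ^ (-p) ≤ 2 ^ p * t ^ (-p) :=
  calc x ^ (-p) ≤ (t / 2) ^ (-p) := rpow_le_rpow_of_nonpos (by positivity) hx (by linarith)
    _ = 2 ^ p * t ^ (-p) := by
      rw [div_rpow ht.le zero_le_two, rpow_neg zero_le_two, div_inv_eq_mul, mul_comm]

theorem integral_rpow_from_one_le {b r : ℝ} (hb : 1 ≤ b) (hr : r < -1) :
    ∫ x in (1:ℝ)..b, x ^ r ≤ -(r + 1)⁻¹ := by
  have h0 : (0:ℝ) ∉ uIcc 1 b := by rw [uIcc_of_le hb]; exact fun h => by linarith [h.1]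
  rw [integral_rpow (Or.inr ⟨hr.ne, h0⟩), one_rpow, sub_div, one_div]
  have : b ^ (r + 1) / (r + 1) ≤ 0 :=
    div_nonpos_of_nonneg_of_nonpos (rpow_nonneg (by linarith) _) (by linarith)
  linarith

namespace IntegralEstimateLem22

noncomputable def rate (t : ℝ) : ℝ := 3 * log t / (2 * t)

noncomputable def integrand (t s : ℝ) : ℝ :=
  exp (-rate t * s) * s ^ (-(3:ℝ)/2) * (t - s) ^ (-(3:ℝ))

noncomputable def majorant (t s : ℝ) : ℝ :=
  8 * s ^ (-(3:ℝ)/2) + 28 * (t - s) ^ (-(2:ℝ))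

variable {t s : ℝ}

theorem rate_nonneg (ht : 1 ≤ t) : 0 ≤ rate t :=
  div_nonneg (by linarith [log_nonneg ht]) (by linarith)

theorem exp_neg_rate_mul_self (ht : 0 < t) : exp (-rate t * t) = t ^ (-(3:ℝ)/2) := by
  rw [rpow_def_of_pos ht, rate]
  field_simp

theorem rate_mul_rpow_le (ht : 0 < t) : rate t * t ^ ((3:ℝ)/4) ≤ 6 := by
  have hlog : log t ≤ t ^ ((1:ℝ)/4) / (1/4) := log_le_rpow_div ht.le (by norm_num)
  have hsplit : t ^ ((1:ℝ)/4) * t ^ ((3:ℝ)/4) = t := by rw [← rpow_add ht]; norm_num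
  rw [rate, div_mul_eq_mul_div, div_le_iff₀ (by positivity)]
  nlinarith [mul_le_mul_of_nonneg_right hlog (rpow_pos_of_pos ht ((3:ℝ)/4)).le]

theorem exp_rate_mul_le {u : ℝ} (hu : 1 ≤ u) (hut : u ≤ t / 2) :
    exp (rate t * u) ≤ 7 * u := by
  have ht : 0 < t := by linarith
  have hβ := rate_nonneg (by linarith : 1 ≤ t)
  have hexp : exp (rate t * u) ≤ t ^ ((3:ℝ)/4) := by
    rw [rpow_def_of_pos ht]
    refine exp_le_exp.mpr ((mul_le_mul_of_nonneg_left hut hβ).trans_eq ?_)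
    rw [rate]
    field_simp
    ring
  calc exp (rate t * u) ≤ 1 + rate t * u * exp (rate t * u) := exp_le_one_add_mul_exp _
    _ ≤ 1 + rate t * u * t ^ ((3:ℝ)/4) := by gcongr
    _ = 1 + rate t * t ^ ((3:ℝ)/4) * u := by ring
    _ ≤ 1 + 6 * u := by gcongr; exact rate_mul_rpow_le ht
    _ ≤ 7 * u := by linarith

theorem integrand_le_of_le_half (hs : 1 ≤ s) (hst : s ≤ t / 2) :
    integrand t s ≤ 8 * t ^ (-(3:ℝ)) * s ^ (-(3:ℝ)/2) := by
  have ht : 0 < t := by linarith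
  have hexp : exp (-rate t * s) ≤ 1 := by
    have := mul_nonneg (rate_nonneg (by linarith : 1 ≤ t)) (by linarith : 0 ≤ s)
    rw [exp_le_one_iff]
    linarith
  have hfar : (t - s) ^ (-(3:ℝ)) ≤ 8 * t ^ (-(3:ℝ)) := by
    have := rpow_neg_le_two_rpow_mul ht (by linarith : t / 2 ≤ t - s) zero_le_three
    norm_num at this ⊢
    exact this
  calc integrand t s ≤ 1 * s ^ (-(3:ℝ)/2) * (8 * t ^ (-(3:ℝ))) := by
        unfold integrand
        gcongr
        exact rpow_nonneg (by linarith) _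
    _ = 8 * t ^ (-(3:ℝ)) * s ^ (-(3:ℝ)/2) := by ring

theorem integrand_le_of_half_le (hs : t / 2 ≤ s) (hst : 1 ≤ t - s) :
    integrand t s ≤ 28 * t ^ (-(3:ℝ)) * (t - s) ^ (-(2:ℝ)) := by
  have ht : 0 < t := by linarith
  have hsplit : exp (-rate t * s) = t ^ (-(3:ℝ)/2) * exp (rate t * (t - s)) := by
    rw [← exp_neg_rate_mul_self ht, ← exp_add]
    ring_nf
  have hnear : s ^ (-(3:ℝ)/2) ≤ 4 * t ^ (-(3:ℝ)/2) := by
    have h := rpow_neg_le_two_rpow_mul ht hs (by norm_num : (0:ℝ) ≤ 3/2)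
    have h2 : (2:ℝ) ^ ((3:ℝ)/2) ≤ 2 ^ (2:ℝ) :=
      rpow_le_rpow_of_exponent_le (by norm_num) (by norm_num)
    rw [neg_div]
    norm_num at h h2
    nlinarith [rpow_pos_of_pos ht (-(3/2) : ℝ)]
  have ht3 : t ^ (-(3:ℝ)/2) * t ^ (-(3:ℝ)/2) = t ^ (-(3:ℝ)) := by
    rw [← rpow_add ht]; norm_num
  have hu2 : (t - s) * (t - s) ^ (-(3:ℝ)) = (t - s) ^ (-(2:ℝ)) := by
    rw [← rpow_one_add' (by linarith) (by norm_num)]; norm_num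
  calc integrand t s
      = t ^ (-(3:ℝ)/2) * exp (rate t * (t - s)) * s ^ (-(3:ℝ)/2) * (t - s) ^ (-(3:ℝ)) := by
        rw [integrand, hsplit]
    _ ≤ t ^ (-(3:ℝ)/2) * (7 * (t - s)) * (4 * t ^ (-(3:ℝ)/2)) * (t - s) ^ (-(3:ℝ)) := by
        gcongr
        · exact rpow_nonneg (by linarith) _
        · exact exp_rate_mul_le hst (by linarith)
    _ = 28 * t ^ (-(3:ℝ)) * (t - s) ^ (-(2:ℝ)) := by rw [← ht3, ← hu2]; ring

theorem integrand_le_majorant (hs : 1 ≤ s) (hst : s ≤ t - 1) :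
    integrand t s ≤ t ^ (-(3:ℝ)) * majorant t s := by
  have h₁ := rpow_nonneg (by linarith : (0:ℝ) ≤ s) (-(3:ℝ)/2)
  have h₂ := rpow_nonneg (by linarith : (0:ℝ) ≤ t - s) (-(2:ℝ))
  have h₃ := rpow_nonneg (by linarith : (0:ℝ) ≤ t) (-(3:ℝ))
  rw [majorant]
  rcases le_total s (t / 2) with h | h
  · nlinarith [integrand_le_of_le_half hs h, mul_nonneg h₃ h₂]
  · nlinarith [integrand_le_of_half_le h (by linarith), mul_nonneg h₃ h₁]

theorem continuousOn_rpow (p : ℝ) : ContinuousOn (fun s : ℝ => s ^ p) (Icc 1 (t - 1)) :=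
  continuousOn_id.rpow_const fun s hs => Or.inl (show (0:ℝ) < s by linarith [hs.1]).ne'

theorem continuousOn_sub_rpow (p : ℝ) : ContinuousOn (fun s => (t - s) ^ p) (Icc 1 (t - 1)) :=
  (continuousOn_const.sub continuousOn_id).rpow_const fun s hs =>
    Or.inl (show (0:ℝ) < t - s by linarith [hs.2]).ne'

theorem intervalIntegrable_integrand (ht : 2 ≤ t) :
    IntervalIntegrable (integrand t) MeasureTheory.volume 1 (t - 1) :=
  ((((Continuous.continuousOn (by fun_prop)).mul (continuousOn_rpow _)).mul
    (continuousOn_sub_rpow _))).intervalIntegrable_of_Icc (by linarith)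

theorem intervalIntegrable_majorant (ht : 2 ≤ t) :
    IntervalIntegrable (majorant t) MeasureTheory.volume 1 (t - 1) :=
  ((continuousOn_const.mul (continuousOn_rpow _)).add
    (continuousOn_const.mul (continuousOn_sub_rpow _))).intervalIntegrable_of_Icc (by linarith)

theorem integral_majorant_le (ht : 2 ≤ t) : ∫ s in (1:ℝ)..(t - 1), majorant t s ≤ 44 := by
  have h1t : (1:ℝ) ≤ t - 1 := by linarith
  have hI₁ := (continuousOn_rpow (t := t) (-(3:ℝ)/2)).intervalIntegrable_of_Icc
    (μ := MeasureTheory.volume) h1t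
  have hI₂ := (continuousOn_sub_rpow (t := t) (-(2:ℝ))).intervalIntegrable_of_Icc
    (μ := MeasureTheory.volume) h1t
  calc ∫ s in (1:ℝ)..(t - 1), majorant t s
      = (8 * ∫ s in (1:ℝ)..(t - 1), s ^ (-(3:ℝ)/2))
          + 28 * ∫ u in (1:ℝ)..(t - 1), u ^ (-(2:ℝ)) := by
        unfold majorant
        rw [integral_add (hI₁.const_mul 8) (hI₂.const_mul 28), integral_const_mul,
          integral_const_mul, integral_comp_sub_left (fun u => u ^ (-(2:ℝ))), sub_sub_cancel]
    _ ≤ 8 * 2 + 28 * 1 := by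
        gcongr
        · exact (integral_rpow_from_one_le h1t (by norm_num)).trans_eq (by norm_num)
        · exact (integral_rpow_from_one_le h1t (by norm_num)).trans_eq (by norm_num)
    _ = 44 := by norm_num

end IntegralEstimateLem22

open IntegralEstimateLem22

/-- The main integral estimate in Lemma 2.2 of the paper: there is `c > 0` such that for
`t ≥ 2`, `∫_1^{t−1} e^{−(3 log t/2t)s} s^{−3/2} (t−s)^{−3} ds ≤ c·t^{−3}`. -/
theorem integral_estimate_lem22 :
    ∃ c > (0:ℝ), ∀ t ≥ (2:ℝ),
      ∫ s in (1:ℝ)..(t - 1),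
          Real.exp (-(3 * Real.log t / (2 * t)) * s) * s ^ (-(3:ℝ)/2) * (t - s) ^ (-(3:ℝ))
        ≤ c * t ^ (-(3:ℝ)) := by
  refine ⟨44, by norm_num, fun t ht => ?_⟩
  calc ∫ s in (1:ℝ)..(t - 1), integrand t s
      ≤ ∫ s in (1:ℝ)..(t - 1), t ^ (-(3:ℝ)) * majorant t s :=
        integral_mono_on (by linarith) (intervalIntegrable_integrand ht)
          ((intervalIntegrable_majorant ht).const_mul _) fun s hs => integrand_le_majorant hs.1 hs.2
    _ = t ^ (-(3:ℝ)) * ∫ s in (1:ℝ)..(t - 1), majorant t s := integral_const_mul _ _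
    _ ≤ t ^ (-(3:ℝ)) * 44 := by gcongr; exact integral_majorant_le ht
    _ = 44 * t ^ (-(3:ℝ)) := mul_comm _ _
end

section
/- There exists a constant C > 0 such that for all real s, t with e ≤ s ≤ t ≤ 2s, ∫_{1}^{s−1} e^{−(log t/(2t))·r} · r^{−3/2} · (s−r)^{−3/2} · (t−r)^{−3/2} dr ≤ C·e^{−(log t/(2t))·s}·(t^{−5/2} + t^{−3/2}·(t−s+1)^{−3/2}). -/
/-! Split the range of integration at `s / 2` and write `L = log t / (2t)`.
On `[1, s/2]` the exponential is at most `1` and `s - r ≥ t/4`, `t - r ≥ t/2`, so the integral is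
`O(t⁻³)` because `r^{-3/2}` is integrable at infinity; and `t⁻³ ≤ e^{-Ls} t^{-5/2}` since
`Ls ≤ Lt = (log t)/2`.
On `[s/2, s-1]` write `e^{-Lr} = e^{-Ls} e^{L(s-r)}`. The function `u ↦ Lu - (log u)/4` is convex
and at most `1` at both ends of `[1, t/2]`, so `e^{Lu} ≤ e·u^{1/4}` there; with `r ≥ t/4` and
`t - r ≥ t - s + 1` what is left is the integrable factor `(s - r)^{-5/4}`. -/

open Real Set MeasureTheory intervalIntegral

lemma integral_le_mul_of_le_mul {f g : ℝ → ℝ} {a b c M : ℝ} (hab : a ≤ b)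
    (hf : ContinuousOn f (Icc a b)) (hg : ContinuousOn g (Icc a b)) (hc : 0 ≤ c)
    (hfg : ∀ x ∈ Icc a b, f x ≤ c * g x) (hM : ∫ x in a..b, g x ≤ M) :
    ∫ x in a..b, f x ≤ c * M :=
  calc ∫ x in a..b, f x ≤ ∫ x in a..b, c * g x :=
        integral_mono_on hab (hf.intervalIntegrable_of_Icc hab)
          ((hg.intervalIntegrable_of_Icc hab).const_mul c) hfg
    _ = c * ∫ x in a..b, g x := integral_const_mul c g
    _ ≤ c * M := by gcongr

lemma integral_one_rpow_le {q b : ℝ} (hq : q < -1) (hb : 1 ≤ b) :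
    ∫ x in (1:ℝ)..b, x ^ q ≤ -1 / (q + 1) := by
  have h0 : (0:ℝ) ∉ uIcc 1 b := by
    rw [uIcc_of_le hb]; exact fun h => by linarith [h.1]
  rw [integral_rpow (Or.inr ⟨hq.ne, h0⟩), one_rpow]
  exact div_le_div_of_nonpos_of_le (by linarith)
    (by linarith [rpow_nonneg (by linarith : (0:ℝ) ≤ b) (q + 1)])

lemma rpow_le_mul_rpow_of_mul_le_of_nonpos {x c t p : ℝ} (hc : 0 < c) (ht : 0 < t) (hp : p ≤ 0)
    (h : c * t ≤ x) : x ^ p ≤ c ^ p * t ^ p :=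
  mul_rpow hc.le ht.le ▸ rpow_le_rpow_of_nonpos (by positivity) h hp

lemma log_div_mul_le_one_add_log_div_four {t u : ℝ} (hu1 : 1 ≤ u) (hu2 : u ≤ t / 2) :
    log t / (2 * t) * u ≤ 1 + log u / 4 := by
  set L := log t / (2 * t)
  have ht : 0 < t := by linarith
  have hL0 : 0 ≤ L := div_nonneg (log_nonneg (by linarith)) (by positivity)
  have hconv : ConvexOn ℝ (Ioi 0) fun x => L * x - log x / 4 := by
    refine ((convexOn_id (convex_Ioi 0)).smul hL0).sub ?_
    exact strictConcaveOn_log_Ioi.concaveOn.smul (by norm_num : (0:ℝ) ≤ 1 / 4) |>.congr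
      fun x _ => by simp only [smul_eq_mul]; ring
  have hmax := hconv.le_on_segment (mem_Ioi.2 one_pos) (mem_Ioi.2 (by linarith : (0:ℝ) < t / 2))
    (by rw [segment_eq_Icc (by linarith)]; exact ⟨hu1, hu2⟩)
  have hL : L ≤ 1 := by
    rw [div_le_one (by positivity)]; linarith [log_le_sub_one_of_pos ht]
  have hLt : L * (t / 2) - log (t / 2) / 4 = log 2 / 4 := by
    simp only [L, log_div ht.ne' two_ne_zero]; field_simp; ring
  have hlog2 : log 2 ≤ 1 := by linarith [log_le_sub_one_of_pos (two_pos : (0:ℝ) < 2)]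
  simp only [log_one, hLt] at hmax
  linarith [hmax.trans (max_le (by linarith : L * 1 - 0 / 4 ≤ 1) (by linarith : log 2 / 4 ≤ 1))]

lemma exp_log_div_mul_le_exp_one_mul_rpow {t u : ℝ} (hu1 : 1 ≤ u) (hu2 : u ≤ t / 2) :
    exp (log t / (2 * t) * u) ≤ exp 1 * u ^ (1 / 4 : ℝ) :=
  calc exp (log t / (2 * t) * u) ≤ exp (1 + log u / 4) :=
        exp_le_exp.2 (log_div_mul_le_one_add_log_div_four hu1 hu2)
    _ = exp 1 * u ^ (1 / 4 : ℝ) := by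
        rw [exp_add, rpow_def_of_pos (by linarith)]; ring_nf

lemma rpow_mul_rpow_le_exp_mul_rpow {s t : ℝ} (ht : 1 ≤ t) (hst : s ≤ t) :
    t ^ (-(3:ℝ)/2) * t ^ (-(3:ℝ)/2) ≤ exp (-(log t / (2 * t)) * s) * t ^ (-(5:ℝ)/2) := by
  have ht0 : 0 < t := by linarith
  have hsplit : t ^ (-(3:ℝ)/2) * t ^ (-(3:ℝ)/2) = t ^ (-(1:ℝ)/2) * t ^ (-(5:ℝ)/2) := by
    rw [← rpow_add ht0, ← rpow_add ht0]; norm_num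
  have hLs : log t / (2 * t) * s ≤ log t / (2 * t) * t :=
    mul_le_mul_of_nonneg_left hst (div_nonneg (log_nonneg ht) (by positivity))
  have hLt : log t / (2 * t) * t = log t / 2 := by field_simp
  rw [hsplit, rpow_def_of_pos ht0]
  exact mul_le_mul_of_nonneg_right (exp_le_exp.2 (by linarith)) (by positivity)

noncomputable def tripleKernel (κ s t r : ℝ) : ℝ :=
  exp (-κ * r) * r ^ (-(3:ℝ)/2) * (s - r) ^ (-(3:ℝ)/2) * (t - r) ^ (-(3:ℝ)/2)

lemma continuousOn_tripleKernel {κ s t : ℝ} (hst : s ≤ t) :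
    ContinuousOn (tripleKernel κ s t) (Icc 1 (s - 1)) := by
  intro r ⟨hr1, hr2⟩
  have h1 : r ≠ 0 := by linarith
  have h2 : s - r ≠ 0 := by linarith
  have h3 : t - r ≠ 0 := by linarith
  apply ContinuousAt.continuousWithinAt
  unfold tripleKernel
  fun_prop (disch := first | exact Or.inl h1 | exact Or.inl h2 | exact Or.inl h3)

lemma intervalIntegrable_tripleKernel {κ s t a b : ℝ} (hst : s ≤ t) (ha : 1 ≤ a) (hab : a ≤ b)
    (hb : b ≤ s - 1) : IntervalIntegrable (tripleKernel κ s t) volume a b :=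
  ((continuousOn_tripleKernel hst).mono (Icc_subset_Icc ha hb)).intervalIntegrable_of_Icc hab

lemma tripleKernel_le_of_le_half {κ s t r : ℝ} (hκ : 0 ≤ κ) (hst : s ≤ t) (hts : t ≤ 2 * s)
    (hr0 : 0 < r) (hr : r ≤ s / 2) :
    tripleKernel κ s t r
      ≤ (1 / 4 : ℝ) ^ (-(3:ℝ)/2) * (1 / 2 : ℝ) ^ (-(3:ℝ)/2) * (t ^ (-(3:ℝ)/2) * t ^ (-(3:ℝ)/2))
        * r ^ (-(3:ℝ)/2) := by
  have ht : 0 < t := by linarith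
  have hsr : 0 < s - r := by linarith
  have htr : 0 < t - r := by linarith
  have h1 : exp (-κ * r) ≤ 1 := exp_le_one_iff.2 (by nlinarith)
  have h2 : (s - r) ^ (-(3:ℝ)/2) ≤ (1 / 4 : ℝ) ^ (-(3:ℝ)/2) * t ^ (-(3:ℝ)/2) :=
    rpow_le_mul_rpow_of_mul_le_of_nonpos (by norm_num) ht (by norm_num) (by linarith)
  have h3 : (t - r) ^ (-(3:ℝ)/2) ≤ (1 / 2 : ℝ) ^ (-(3:ℝ)/2) * t ^ (-(3:ℝ)/2) :=
    rpow_le_mul_rpow_of_mul_le_of_nonpos (by norm_num) ht (by norm_num) (by linarith)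
  calc tripleKernel κ s t r
      ≤ 1 * r ^ (-(3:ℝ)/2) * ((1 / 4 : ℝ) ^ (-(3:ℝ)/2) * t ^ (-(3:ℝ)/2))
          * ((1 / 2 : ℝ) ^ (-(3:ℝ)/2) * t ^ (-(3:ℝ)/2)) := by
        unfold tripleKernel; gcongr
    _ = _ := by ring

lemma tripleKernel_le_of_half_le {s t r : ℝ} (hst : s ≤ t) (hts : t ≤ 2 * s) (hr : s / 2 ≤ r)
    (hr1 : r ≤ s - 1) :
    tripleKernel (log t / (2 * t)) s t r
      ≤ exp 1 * (1 / 4 : ℝ) ^ (-(3:ℝ)/2)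
          * (exp (-(log t / (2 * t)) * s) * t ^ (-(3:ℝ)/2) * (t - s + 1) ^ (-(3:ℝ)/2))
          * (s - r) ^ (-(5:ℝ)/4) := by
  set L := log t / (2 * t)
  have hr0 : 0 < r := by linarith
  have ht : 0 < t := by linarith
  have hsr : 0 < s - r := by linarith
  have htr : 0 < t - r := by linarith
  have hexp : exp (-L * r) = exp (-L * s) * exp (L * (s - r)) := by rw [← exp_add]; ring_nf
  have h1 : exp (L * (s - r)) ≤ exp 1 * (s - r) ^ (1 / 4 : ℝ) :=
    exp_log_div_mul_le_exp_one_mul_rpow (by linarith) (by linarith)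
  have h2 : r ^ (-(3:ℝ)/2) ≤ (1 / 4 : ℝ) ^ (-(3:ℝ)/2) * t ^ (-(3:ℝ)/2) :=
    rpow_le_mul_rpow_of_mul_le_of_nonpos (by norm_num) (by linarith) (by norm_num) (by linarith)
  have h3 : (t - r) ^ (-(3:ℝ)/2) ≤ (t - s + 1) ^ (-(3:ℝ)/2) :=
    rpow_le_rpow_of_nonpos (by linarith) (by linarith) (by norm_num)
  have h4 : (s - r) ^ (1 / 4 : ℝ) * (s - r) ^ (-(3:ℝ)/2) = (s - r) ^ (-(5:ℝ)/4) := by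
    rw [← rpow_add hsr]; norm_num
  calc tripleKernel L s t r
      = exp (-L * s) * exp (L * (s - r)) * r ^ (-(3:ℝ)/2) * (s - r) ^ (-(3:ℝ)/2)
          * (t - r) ^ (-(3:ℝ)/2) := by rw [tripleKernel, hexp]
    _ ≤ exp (-L * s) * (exp 1 * (s - r) ^ (1 / 4 : ℝ))
          * ((1 / 4 : ℝ) ^ (-(3:ℝ)/2) * t ^ (-(3:ℝ)/2)) * (s - r) ^ (-(3:ℝ)/2)
          * (t - s + 1) ^ (-(3:ℝ)/2) := by gcongr
    _ = _ := by rw [← h4]; ring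

lemma integral_tripleKernel_le_of_le_half {κ s t : ℝ} (hκ : 0 ≤ κ) (hs : 2 ≤ s) (hst : s ≤ t)
    (hts : t ≤ 2 * s) :
    ∫ r in (1:ℝ)..(s / 2), tripleKernel κ s t r
      ≤ (1 / 4 : ℝ) ^ (-(3:ℝ)/2) * (1 / 2 : ℝ) ^ (-(3:ℝ)/2) * (t ^ (-(3:ℝ)/2) * t ^ (-(3:ℝ)/2))
        * 2 := by
  have ht : 0 < t := by linarith
  refine integral_le_mul_of_le_mul (by linarith)
    ((continuousOn_tripleKernel hst).mono (Icc_subset_Icc le_rfl (by linarith)))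
    (continuousOn_id.rpow_const fun r hr => Or.inl (by linarith [hr.1] : r ≠ 0))
    (by positivity) (fun r hr => tripleKernel_le_of_le_half hκ hst hts (by linarith [hr.1]) hr.2)
    ((integral_one_rpow_le (by norm_num) (by linarith)).trans_eq (by norm_num))

lemma integral_tripleKernel_le_of_half_le {s t : ℝ} (hs : 2 ≤ s) (hst : s ≤ t)
    (hts : t ≤ 2 * s) :
    ∫ r in (s / 2)..(s - 1), tripleKernel (log t / (2 * t)) s t r
      ≤ exp 1 * (1 / 4 : ℝ) ^ (-(3:ℝ)/2)
          * (exp (-(log t / (2 * t)) * s) * t ^ (-(3:ℝ)/2) * (t - s + 1) ^ (-(3:ℝ)/2)) * 4 := by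
  have ht : 0 < t := by linarith
  have hts1 : 0 < t - s + 1 := by linarith
  have hsub : ∫ r in (s / 2)..(s - 1), (s - r) ^ (-(5:ℝ)/4)
      = ∫ u in (1:ℝ)..(s / 2), u ^ (-(5:ℝ)/4) := by
    rw [integral_comp_sub_left (fun u : ℝ => u ^ (-(5:ℝ)/4)) s, sub_sub_cancel, sub_half]
  refine integral_le_mul_of_le_mul (by linarith)
    ((continuousOn_tripleKernel hst).mono (Icc_subset_Icc (by linarith) le_rfl))
    ((continuousOn_const.sub continuousOn_id).rpow_const
      fun r hr => Or.inl (by linarith [hr.2] : s - r ≠ 0))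
    (by positivity) (fun r hr => tripleKernel_le_of_half_le hst hts hr.1 hr.2)
    (hsub ▸ (integral_one_rpow_le (by norm_num) (by linarith)).trans_eq (by norm_num))

/-- The main integral estimate in Lemma 2.3 of the paper: there is `C > 0` such that for
`e ≤ s ≤ t ≤ 2s`,
`∫_1^{s−1} e^{−(log t/2t)r} r^{−3/2}(s−r)^{−3/2}(t−r)^{−3/2} dr
  ≤ C·e^{−(log t/2t)s}(t^{−5/2} + t^{−3/2}(t−s+1)^{−3/2})`. -/
theorem integral_estimate_lem23 :
    ∃ C > (0:ℝ), ∀ s t : ℝ, Real.exp 1 ≤ s → s ≤ t → t ≤ 2 * s →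
      ∫ r in (1:ℝ)..(s - 1),
          Real.exp (-(Real.log t / (2 * t)) * r) * r ^ (-(3:ℝ)/2)
            * (s - r) ^ (-(3:ℝ)/2) * (t - r) ^ (-(3:ℝ)/2)
        ≤ C * Real.exp (-(Real.log t / (2 * t)) * s)
            * (t ^ (-(5:ℝ)/2) + t ^ (-(3:ℝ)/2) * (t - s + 1) ^ (-(3:ℝ)/2)) := by
  set c := (1 / 4 : ℝ) ^ (-(3:ℝ)/2)
  refine ⟨c * (1 / 2 : ℝ) ^ (-(3:ℝ)/2) * 2 + exp 1 * c * 4, by positivity,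
    fun s t hes hst hts => ?_⟩
  set L := log t / (2 * t)
  have hs : 2 ≤ s := by linarith [add_one_le_exp 1]
  have ht : 0 < t := by linarith
  have hts1 : 0 < t - s + 1 := by linarith
  have hI₁ := integral_tripleKernel_le_of_le_half (κ := L)
    (div_nonneg (log_nonneg (by linarith)) (by positivity)) hs hst hts
  have hI₂ := integral_tripleKernel_le_of_half_le hs hst hts
  have hE := mul_le_mul_of_nonneg_left (rpow_mul_rpow_le_exp_mul_rpow (by linarith) hst)
    (by positivity : 0 ≤ c * (1 / 2 : ℝ) ^ (-(3:ℝ)/2) * 2)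
  change ∫ r in (1:ℝ)..(s - 1), tripleKernel L s t r ≤ _
  rw [← integral_add_adjacent_intervals (b := s / 2)
    (intervalIntegrable_tripleKernel hst le_rfl (by linarith) (by linarith))
    (intervalIntegrable_tripleKernel hst (by linarith) (by linarith) le_rfl)]
  have hX : 0 ≤ exp (-L * s) * t ^ (-(5:ℝ)/2) := by positivity
  have hY : 0 ≤ exp (-L * s) * t ^ (-(3:ℝ)/2) * (t - s + 1) ^ (-(3:ℝ)/2) := by positivity
  linarith [mul_nonneg (by positivity : 0 ≤ c * (1 / 2 : ℝ) ^ (-(3:ℝ)/2) * 2) hY,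
    mul_nonneg (by positivity : 0 ≤ exp 1 * c * 4) hX]
end

section
/- There exists a constant c > 0 such that for all real s, t with e ≤ s ≤ t ≤ 2s, ∫_{1}^{s/2} e^{−(log t/(2t))·r} · r^{−3/2} · (s−r)^{−3/2} · (t−r)^{−3/2} dr ≤ c·s^{−3/2}·t^{−3/2}. -/
open Real MeasureTheory Set

/-
The factor `e^{-λ r}` is at most `1`, and for `r ≤ s/2 ≤ t/2` the factors `(s-r)^{-3/2}` and
`(t-r)^{-3/2}` are at most `(s/2)^{-3/2}` and `(t/2)^{-3/2}`. What remains is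
`∫_1^∞ r^{-3/2} dr = 2`, so the integral is at most `2 (s/2)^{-3/2} (t/2)^{-3/2} = 16 s^{-3/2} t^{-3/2}`.
-/

theorem integral_one_rpow_le_of_lt_neg_one {p b : ℝ} (hp : p < -1) (hb : 1 ≤ b) :
    ∫ r in (1:ℝ)..b, r ^ p ≤ -1 / (p + 1) := by
  rw [integral_rpow (Or.inr ⟨hp.ne, notMem_uIcc_of_lt one_pos (by linarith)⟩), one_rpow]
  exact div_le_div_of_nonpos_of_le (by linarith)
    (by linarith [rpow_nonneg (zero_le_one.trans hb) (p + 1)])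

theorem exp_mul_rpow_mul_rpow_mul_rpow_le {l p q r s t : ℝ} (hl : 0 ≤ l) (hq : q ≤ 0)
    (hr : 0 < r) (hrs : 2 * r ≤ s) (hst : s ≤ t) :
    exp (-l * r) * r ^ p * (s - r) ^ q * (t - r) ^ q ≤ (s / 2) ^ q * (t / 2) ^ q * r ^ p := by
  have hexp : exp (-l * r) ≤ 1 := exp_le_one_iff.2 (by nlinarith)
  have hs : (s - r) ^ q ≤ (s / 2) ^ q := rpow_le_rpow_of_nonpos (by linarith) (by linarith) hq
  have ht : (t - r) ^ q ≤ (t / 2) ^ q := rpow_le_rpow_of_nonpos (by linarith) (by linarith) hq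
  have : 0 ≤ r ^ p := rpow_nonneg hr.le p
  have : 0 ≤ (s - r) ^ q := rpow_nonneg (by linarith) q
  have : 0 ≤ (t - r) ^ q := rpow_nonneg (by linarith) q
  have : 0 ≤ (s / 2) ^ q := rpow_nonneg (by linarith) q
  calc exp (-l * r) * r ^ p * (s - r) ^ q * (t - r) ^ q
      ≤ 1 * r ^ p * (s / 2) ^ q * (t / 2) ^ q := by gcongr
    _ = (s / 2) ^ q * (t / 2) ^ q * r ^ p := by ring

theorem integral_exp_mul_rpow_mul_rpow_mul_rpow_le {l p q s t : ℝ} (hl : 0 ≤ l) (hp : p < -1)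
    (hq : q ≤ 0) (hs : 2 ≤ s) (hst : s ≤ t) :
    ∫ r in (1:ℝ)..(s / 2), exp (-l * r) * r ^ p * (s - r) ^ q * (t - r) ^ q
      ≤ -1 / (p + 1) * (s / 2) ^ q * (t / 2) ^ q := by
  have hb : (1:ℝ) ≤ s / 2 := by linarith
  have hC : 0 ≤ (s / 2) ^ q * (t / 2) ^ q :=
    mul_nonneg (rpow_nonneg (by linarith) q) (rpow_nonneg (by linarith) q)
  rw [intervalIntegral.integral_of_le hb]
  calc ∫ r in Ioc 1 (s / 2), exp (-l * r) * r ^ p * (s - r) ^ q * (t - r) ^ q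
      ≤ ∫ r in Ioc 1 (s / 2), (s / 2) ^ q * (t / 2) ^ q * r ^ p := by
        refine setIntegral_mono_of_nonneg (fun r hr ↦ ?_) (fun r hr ↦ ?_) ?_
        · have : 0 ≤ (s - r) ^ q := rpow_nonneg (by linarith [hr.2]) q
          have : 0 ≤ (t - r) ^ q := rpow_nonneg (by linarith [hr.2]) q
          have : 0 ≤ r ^ p := rpow_nonneg (by linarith [hr.1]) p
          positivity
        · exact exp_mul_rpow_mul_rpow_mul_rpow_le hl hq (by linarith [hr.1]) (by linarith [hr.2]) hst
        · exact ((intervalIntegral.intervalIntegrable_rpow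
            (Or.inr (notMem_uIcc_of_lt one_pos (by linarith)))).const_mul _).1
    _ = (s / 2) ^ q * (t / 2) ^ q * ∫ r in (1:ℝ)..(s / 2), r ^ p := by
        rw [integral_const_mul, intervalIntegral.integral_of_le hb]
    _ ≤ (s / 2) ^ q * (t / 2) ^ q * (-1 / (p + 1)) :=
        mul_le_mul_of_nonneg_left (integral_one_rpow_le_of_lt_neg_one hp hb) hC
    _ = -1 / (p + 1) * (s / 2) ^ q * (t / 2) ^ q := by ring

/-- Small-`r` case in the proof of Lemma 2.3 of the paper: there is `c > 0` such that for
`e ≤ s ≤ t ≤ 2s`,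
`∫_1^{s/2} e^{−(log t/2t)r} r^{−3/2}(s−r)^{−3/2}(t−r)^{−3/2} dr ≤ c·s^{−3/2}·t^{−3/2}`. -/
theorem integral_estimate_small_r :
    ∃ c > (0:ℝ), ∀ s t : ℝ, Real.exp 1 ≤ s → s ≤ t → t ≤ 2 * s →
      ∫ r in (1:ℝ)..(s / 2),
          Real.exp (-(Real.log t / (2 * t)) * r) * r ^ (-(3:ℝ)/2)
            * (s - r) ^ (-(3:ℝ)/2) * (t - r) ^ (-(3:ℝ)/2)
        ≤ c * s ^ (-(3:ℝ)/2) * t ^ (-(3:ℝ)/2) := by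
  refine ⟨16, by norm_num, fun s t hes hst _ ↦ ?_⟩
  have hs : 2 ≤ s := by linarith [exp_one_gt_d9]
  have hl : 0 ≤ log t / (2 * t) :=
    div_nonneg (log_nonneg (by linarith)) (by linarith)
  have two_rpow : (2:ℝ) ^ (-(3:ℝ)/2) * 2 ^ (-(3:ℝ)/2) = 8⁻¹ := by
    rw [← rpow_add two_pos, show -(3:ℝ)/2 + -(3:ℝ)/2 = ((-3:ℤ):ℝ) by norm_num, rpow_intCast]
    norm_num
  calc _ ≤ -1 / (-(3:ℝ)/2 + 1) * (s / 2) ^ (-(3:ℝ)/2) * (t / 2) ^ (-(3:ℝ)/2) :=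
        integral_exp_mul_rpow_mul_rpow_mul_rpow_le hl (by norm_num) (by norm_num) hs hst
    _ = 16 * s ^ (-(3:ℝ)/2) * t ^ (-(3:ℝ)/2) := by
        rw [div_rpow (by linarith) zero_le_two, div_rpow (by linarith) zero_le_two, mul_assoc, div_mul_div_comm, two_rpow]
        norm_num
        ring
end

section
/- There exists a constant c > 0 such that for all real s, t with t ≥ 16 and e ≤ s ≤ t ≤ 2s, ∫_{s/2}^{s − s·t^{−1/4}} e^{−(log t/(2t))·r} · r^{−3/2} · (s−r)^{−3/2} · (t−r)^{−3/2} dr ≤ c·t^{−5/2}·e^{−(log t/(2t))·s}. -/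
open Real

/-!
On the range of integration, `r ≥ s/2 ≥ t/4`, whereas `s - r` and `t - r` are at least
`s t^{-1/4} ≥ t^{3/4}/2`. Moreover `s - r ≤ s/2 ≤ t/2`, so the exponential factor exceeds its
value at `r = s` by at most `exp (log t / 4) = t^{1/4}`. Bounding the integrand by the product
of these bounds and the length of the range by `t/2` gives `32 t^{-5/2} e^{-(log t/2t) s}`.
-/

theorem rpow_neg_one_div_four_le_half {t : ℝ} (ht : 16 ≤ t) : t ^ (-(1:ℝ)/4) ≤ 1 / 2 :=
  calc t ^ (-(1:ℝ)/4) ≤ 16 ^ (-(1:ℝ)/4) := rpow_le_rpow_of_nonpos (by norm_num) ht (by norm_num)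
    _ = 1 / 2 := by norm_num

theorem exp_log_div_mul_le_rpow {t x : ℝ} (ht : 1 ≤ t) (hx : x ≤ t / 2) :
    exp (log t / (2 * t) * x) ≤ t ^ ((1:ℝ)/4) := by
  rw [rpow_def_of_pos (by linarith), exp_le_exp]
  calc log t / (2 * t) * x ≤ log t / (2 * t) * (t / 2) :=
        mul_le_mul_of_nonneg_left hx (div_nonneg (log_nonneg ht) (by positivity))
    _ = log t * (1 / 4) := by field_simp; ring

theorem rpow_mul_rpow_le_of_nonpos {a x y p : ℝ} (ha : 0 < a) (hx : a ≤ x) (hy : a ≤ y)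
    (hp : p ≤ 0) : x ^ p * y ^ p ≤ a ^ (p + p) := by
  rw [rpow_add ha]
  exact mul_le_mul (rpow_le_rpow_of_nonpos ha hx hp) (rpow_le_rpow_of_nonpos ha hy hp)
    (rpow_nonneg (ha.le.trans hy) p) (rpow_nonneg ha.le p)

theorem norm_integrand_le {s t r : ℝ} (ht : 1 ≤ t) (hst : s ≤ t) (hts : t ≤ 2 * s)
    (hr : s / 2 ≤ r) (hr' : r ≤ s - s * t ^ (-(1:ℝ)/4)) :
    ‖exp (-(log t / (2 * t)) * r) * r ^ (-(3:ℝ)/2) * (s - r) ^ (-(3:ℝ)/2)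
        * (t - r) ^ (-(3:ℝ)/2)‖
      ≤ exp (-(log t / (2 * t)) * s)
        * (t ^ ((1:ℝ)/4) * (t / 4) ^ (-(3:ℝ)/2) * (t ^ ((3:ℝ)/4) / 2) ^ (-(3:ℝ))) := by
  have ht0 : 0 < t := by linarith
  set v := t ^ ((3:ℝ)/4) / 2 with hv_def
  have hv0 : 0 < v := by positivity
  have hv : v ≤ s * t ^ (-(1:ℝ)/4) :=
    calc v = t / 2 * t ^ (-(1:ℝ)/4) := by
          rw [hv_def, div_mul_eq_mul_div, ← rpow_one_add' ht0.le (by norm_num)]; norm_num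
      _ ≤ s * t ^ (-(1:ℝ)/4) := by gcongr; linarith
  have hsr : v ≤ s - r := by linarith
  have htr : v ≤ t - r := by linarith
  have ht4 : 0 < t / 4 := by positivity
  have hr_nonneg : 0 ≤ r := by linarith
  have hsr0 : 0 ≤ s - r := hv0.le.trans hsr
  have htr0 : 0 ≤ t - r := hv0.le.trans htr
  have hp : -(3:ℝ)/2 ≤ 0 := by norm_num
  have hexp : exp (-(log t / (2 * t)) * r)
      = exp (-(log t / (2 * t)) * s) * exp (log t / (2 * t) * (s - r)) := by
    rw [← exp_add]; ring_nf
  calc _ = exp (-(log t / (2 * t)) * s) * (exp (log t / (2 * t) * (s - r)) * r ^ (-(3:ℝ)/2)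
          * ((s - r) ^ (-(3:ℝ)/2) * (t - r) ^ (-(3:ℝ)/2))) := by
        rw [norm_of_nonneg (by positivity), hexp]; ring
    _ ≤ exp (-(log t / (2 * t)) * s) * (t ^ ((1:ℝ)/4) * (t / 4) ^ (-(3:ℝ)/2)
          * v ^ (-(3:ℝ)/2 + -(3:ℝ)/2)) := by
        refine mul_le_mul_of_nonneg_left (mul_le_mul (mul_le_mul
          (exp_log_div_mul_le_rpow ht (by linarith)) (rpow_le_rpow_of_nonpos ht4 (by linarith) hp)
          ?_ ?_) (rpow_mul_rpow_le_of_nonpos hv0 hsr htr hp) ?_ ?_) ?_ <;> positivity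
    _ = _ := by norm_num

theorem half_mul_integrand_bound_eq {t : ℝ} (ht : 0 < t) :
    t / 2 * (t ^ ((1:ℝ)/4) * (t / 4) ^ (-(3:ℝ)/2) * (t ^ ((3:ℝ)/4) / 2) ^ (-(3:ℝ)))
      = 32 * t ^ (-(5:ℝ)/2) := by
  rw [div_rpow ht.le (by norm_num), div_rpow (by positivity) (by norm_num), ← rpow_mul ht.le,
    show -(5:ℝ)/2 = 1 + 1/4 + -3/2 + 3/4 * -3 by norm_num, rpow_add ht, rpow_add ht,
    rpow_add ht, rpow_one]
  norm_num
  ring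

/-- Intermediate-`r` case in the proof of Lemma 2.3 of the paper: there is `c > 0` such
that for `t ≥ 16` and `e ≤ s ≤ t ≤ 2s`,
`∫_{s/2}^{s−s·t^{−1/4}} e^{−(log t/2t)r} r^{−3/2}(s−r)^{−3/2}(t−r)^{−3/2} dr
  ≤ c·t^{−5/2}·e^{−(log t/2t)s}`. -/
theorem integral_estimate_intermediate_r :
    ∃ c > (0:ℝ), ∀ s t : ℝ, 16 ≤ t → Real.exp 1 ≤ s → s ≤ t → t ≤ 2 * s →
      ∫ r in (s / 2)..(s - s * t ^ (-(1:ℝ)/4)),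
          Real.exp (-(Real.log t / (2 * t)) * r) * r ^ (-(3:ℝ)/2)
            * (s - r) ^ (-(3:ℝ)/2) * (t - r) ^ (-(3:ℝ)/2)
        ≤ c * t ^ (-(5:ℝ)/2) * Real.exp (-(Real.log t / (2 * t)) * s) := by
  refine ⟨32, by norm_num, fun s t ht _ hst hts => ?_⟩
  have ht0 : 0 < t := by linarith
  have hs0 : 0 < s := by linarith
  have hgap : s * t ^ (-(1:ℝ)/4) ≤ s / 2 := by
    linarith [mul_le_mul_of_nonneg_left (rpow_neg_one_div_four_le_half ht) hs0.le]
  have hlen : |s - s * t ^ (-(1:ℝ)/4) - s / 2| ≤ t / 2 := by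
    have : 0 ≤ s * t ^ (-(1:ℝ)/4) := by positivity
    rw [abs_of_nonneg (by linarith)]; linarith
  calc _ ≤ exp (-(log t / (2 * t)) * s)
        * (t ^ ((1:ℝ)/4) * (t / 4) ^ (-(3:ℝ)/2) * (t ^ ((3:ℝ)/4) / 2) ^ (-(3:ℝ)))
        * |s - s * t ^ (-(1:ℝ)/4) - s / 2| := by
        refine (le_norm_self _).trans
          (intervalIntegral.norm_integral_le_of_norm_le_const fun r hr => ?_)
        rw [Set.uIoc_of_le (by linarith)] at hr
        exact norm_integrand_le (by linarith) hst hts hr.1.le hr.2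
    _ ≤ exp (-(log t / (2 * t)) * s)
        * (t ^ ((1:ℝ)/4) * (t / 4) ^ (-(3:ℝ)/2) * (t ^ ((3:ℝ)/4) / 2) ^ (-(3:ℝ))) * (t / 2) := by
        gcongr
    _ = _ := by rw [← half_mul_integrand_bound_eq ht0]; ring
end
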